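/- arXiv:2410.11678 — 2 statements merged into one kernel-verified Lean document; each statement's English description precedes it below -/
import Mathlib

section
/- Let E^{i_1…i_k} : ℝ^d → ℝ be smooth compactly supported functions (components of a rank-k tensor field) and define ρ = ∂_{i_1}⋯∂_{i_k} E^{i_1…i_k} (sum over all indices). Then every moment ∫_{ℝ^d} x^{j_1}⋯x^{j_l} ρ dx with l ≤ k−1 vanishes. -/
open MeasureTheory MvPolynomial
open scoped ContDiff

/-- Partial derivative in direction `i` of a function on `ℝ^d`. -/
noncomputable def pd {d : ℕ} (i : Fin d) (f : (Fin d → ℝ) → ℝ) : (Fin d → ℝ) → ℝ :=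
  fun x => fderiv ℝ f x (Pi.single i 1)

/-- The Euclidean Laplacian `Δ f = ∑ i ∂_i ∂_i f`. -/
noncomputable def lap {d : ℕ} (f : (Fin d → ℝ) → ℝ) : (Fin d → ℝ) → ℝ :=
  fun x => ∑ i : Fin d, pd i (pd i f) x

/-- The Laplacian on polynomials: `Δ p = ∑ i ∂_i ∂_i p`. -/
noncomputable def plap {d : ℕ} (p : MvPolynomial (Fin d) ℝ) : MvPolynomial (Fin d) ℝ :=
  ∑ i : Fin d, pderiv i (pderiv i p)


/-- Iterated partial derivative `∂_{ι 0} ⋯ ∂_{ι (k-1)} f`. -/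
noncomputable def pdMulti {d : ℕ} : {k : ℕ} → (Fin k → Fin d) → ((Fin d → ℝ) → ℝ) → ((Fin d → ℝ) → ℝ)
  | 0, _, f => f
  | _ + 1, ι, f => pd (ι 0) (pdMulti (ι ∘ Fin.succ) f)


-- smoothness of pd
lemma pd_contDiff {d : ℕ} (i : Fin d) {f : (Fin d → ℝ) → ℝ} (hf : ContDiff ℝ ∞ f) :
    ContDiff ℝ ∞ (pd i f) := by
  have h := (contDiff_infty_iff_fderiv.mp hf).2
  exact (ContinuousLinearMap.apply ℝ ℝ (Pi.single i 1)).contDiff.comp h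

lemma pd_compactSupport {d : ℕ} (i : Fin d) {f : (Fin d → ℝ) → ℝ} (hf : HasCompactSupport f) :
    HasCompactSupport (pd i f) :=
  hf.fderiv_apply ℝ (Pi.single i 1)

lemma pdMulti_contDiff {d : ℕ} : ∀ {k : ℕ} (ι : Fin k → Fin d) {f : (Fin d → ℝ) → ℝ},
    ContDiff ℝ ∞ f → ContDiff ℝ ∞ (pdMulti ι f)
  | 0, _, _, hf => hf
  | k + 1, ι, f, hf => pd_contDiff _ (pdMulti_contDiff (ι ∘ Fin.succ) hf)

lemma pdMulti_compactSupport {d : ℕ} : ∀ {k : ℕ} (ι : Fin k → Fin d) {f : (Fin d → ℝ) → ℝ},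
    HasCompactSupport f → HasCompactSupport (pdMulti ι f)
  | 0, _, _, hf => hf
  | k + 1, ι, f, hf => pd_compactSupport _ (pdMulti_compactSupport (ι ∘ Fin.succ) hf)

-- derivative of polynomial evaluation
noncomputable def polyCLM {d : ℕ} (p : MvPolynomial (Fin d) ℝ) (x : Fin d → ℝ) :
    (Fin d → ℝ) →L[ℝ] ℝ :=
  ∑ i : Fin d, eval x (pderiv i p) • (ContinuousLinearMap.proj (R := ℝ) (φ := fun _ : Fin d => ℝ) i)

lemma hasFDerivAt_eval {d : ℕ} (p : MvPolynomial (Fin d) ℝ) (x : Fin d → ℝ) :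
    HasFDerivAt (fun y => eval y p) (polyCLM p x) x := by
  induction p using MvPolynomial.induction_on with
  | C a =>
      have : polyCLM (C a : MvPolynomial (Fin d) ℝ) x = 0 := by
        simp [polyCLM]
      simpa [this] using (hasFDerivAt_const (𝕜 := ℝ) a x)
  | add p q hp hq =>
      have : polyCLM (p + q) x = polyCLM p x + polyCLM q x := by
        simp [polyCLM, add_smul, Finset.sum_add_distrib]
      rw [this]
      convert hp.add hq using 1
      all_goals first | rfl | (funext y; simp)
  | mul_X p i hp =>
      have hX : HasFDerivAt (fun y : Fin d → ℝ => y i) ((ContinuousLinearMap.proj (R := ℝ) (φ := fun _ : Fin d => ℝ) i)) x :=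
        ((ContinuousLinearMap.proj (R := ℝ) (φ := fun _ : Fin d => ℝ) i) : (Fin d → ℝ) →L[ℝ] ℝ).hasFDerivAt
      have h := hp.mul hX
      have : polyCLM (p * X i) x
          = eval x p • (ContinuousLinearMap.proj (R := ℝ) (φ := fun _ : Fin d => ℝ) i) + (x i) • polyCLM p x := by
        ext v
        simp only [polyCLM, ContinuousLinearMap.sum_apply, ContinuousLinearMap.add_apply,
          ContinuousLinearMap.smul_apply, ContinuousLinearMap.proj_apply, smul_eq_mul,
          pderiv_mul, pderiv_X, map_add, map_mul, eval_X, add_mul, Finset.sum_add_distrib]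
        simp only [Pi.single_apply, apply_ite, map_one, map_zero, mul_one, mul_zero,
          ite_mul, zero_mul, Finset.sum_ite_eq', Finset.sum_ite_eq, Finset.mem_univ, if_true, Finset.mul_sum]
        rw [add_comm]
        congr 1
        exact Finset.sum_congr rfl (fun a _ => by ring)
      rw [this]
      convert h using 1
      all_goals first | rfl | (funext y; simp)

lemma pd_eval {d : ℕ} (i : Fin d) (p : MvPolynomial (Fin d) ℝ) :
    pd i (fun y => eval y p) = fun x => eval x (pderiv i p) := by
  funext x
  rw [pd, (hasFDerivAt_eval p x).fderiv]
  simp [polyCLM, ContinuousLinearMap.sum_apply, Pi.single_apply,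
    Finset.sum_ite_eq', Finset.sum_ite_eq]

lemma eval_differentiable {d : ℕ} (p : MvPolynomial (Fin d) ℝ) :
    Differentiable ℝ (fun y : Fin d → ℝ => eval y p) :=
  fun x => (hasFDerivAt_eval p x).differentiableAt

lemma totalDegree_pderiv_lt {d : ℕ} (i : Fin d) (p : MvPolynomial (Fin d) ℝ)
    (hp : 1 ≤ p.totalDegree) : (pderiv i p).totalDegree < p.totalDegree := by
  have h : pderiv i p = ∑ m ∈ p.support, monomial (m - Finsupp.single i 1) (coeff m p * m i) := by
    conv_lhs => rw [← support_sum_monomial_coeff p]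
    rw [map_sum]
    simp [pderiv_monomial]
  rw [h]
  refine lt_of_le_of_lt ((totalDegree_finset_sum _ _).trans (Finset.sup_le fun m hm => ?_))
    (Nat.sub_lt (lt_of_lt_of_le Nat.zero_lt_one hp) Nat.one_pos)
  by_cases hmi : m i = 0
  · simp [hmi]
  · refine (totalDegree_monomial_le _ _).trans ?_
    have hle : (m.sum fun _ e => e) ≤ p.totalDegree := le_totalDegree hm
    have hsum : ∀ s : Fin d →₀ ℕ, (s.sum fun _ e => e) = ∑ j : Fin d, s j := by
      intro s
      rw [Finsupp.sum_fintype]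
      intro j; rfl
    rw [hsum] at hle
    rw [Finsupp.sum_fintype _ _ fun j => rfl]
    have hsplit : ∀ f : Fin d → ℕ, ∑ j : Fin d, f j = ∑ j ∈ Finset.univ.erase i, f j + f i := by
      intro f
      rw [Finset.sum_erase_add _ _ (Finset.mem_univ i)]
    rw [hsplit] at hle ⊢
    have heq : ∑ j ∈ Finset.univ.erase i, (m - (Finsupp.single i 1 : Fin d →₀ ℕ)) j
        = ∑ j ∈ Finset.univ.erase i, m j := by
      refine Finset.sum_congr rfl fun j hj => ?_
      rw [Finsupp.tsub_apply, Finsupp.single_apply, if_neg (Finset.ne_of_mem_erase hj).symm]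
      simp
    have hi : (m - (Finsupp.single i 1 : Fin d →₀ ℕ)) i = m i - 1 := by
      rw [Finsupp.tsub_apply, Finsupp.single_apply, if_pos rfl]
    simp only [id_eq]
    rw [heq, hi]
    omega

lemma pderiv_eq_zero_of_totalDegree_eq_zero {d : ℕ} (i : Fin d) (p : MvPolynomial (Fin d) ℝ)
    (hp : p.totalDegree = 0) : pderiv i p = 0 := by
  have h := (totalDegree_eq_zero_iff (Fin d) p).mp hp
  conv_lhs => rw [← support_sum_monomial_coeff p]
  rw [map_sum]
  refine Finset.sum_eq_zero fun m hm => ?_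
  rw [pderiv_monomial, h m hm i]
  simp

lemma key_lemma {d : ℕ} : ∀ (k : ℕ) (ι : Fin k → Fin d) (f : (Fin d → ℝ) → ℝ),
    ContDiff ℝ ∞ f → HasCompactSupport f → ∀ p : MvPolynomial (Fin d) ℝ,
    (p.totalDegree < k ∨ p = 0) →
    ∫ x : Fin d → ℝ, eval x p * pdMulti ι f x = 0 := by
  intro k
  induction k with
  | zero =>
      intro ι f hf hfc p hp
      rcases hp with hp | rfl
      · omega
      · simp
  | succ k IH =>
      intro ι f hf hfc p hp
      rcases hp with hp | rfl
      swap
      · simp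
      set g := pdMulti (ι ∘ Fin.succ) f with hg_def
      have hg : ContDiff ℝ ∞ g := pdMulti_contDiff _ hf
      have hgc : HasCompactSupport g := pdMulti_compactSupport _ hfc
      have hgcont : Continuous g := hg.continuous
      set i := ι 0 with hi_def
      have hpdg_cont : Continuous (pd i g) := (pd_contDiff i hg).continuous
      have hpdg_supp : HasCompactSupport (pd i g) := pd_compactSupport i hgc
      have hpcont : Continuous (fun x : Fin d → ℝ => eval x p) :=
        (eval_differentiable p).continuous
      have hqcont : Continuous (fun x : Fin d → ℝ => eval x (pderiv i p)) :=
        (eval_differentiable (pderiv i p)).continuous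
      have hfg' : Integrable (fun x : Fin d → ℝ =>
          eval x p * fderiv ℝ g x (Pi.single i 1)) volume := by
        have : (fun x : Fin d → ℝ => eval x p * fderiv ℝ g x (Pi.single i 1))
            = fun x => eval x p * pd i g x := rfl
        rw [this]
        exact (hpcont.mul hpdg_cont).integrable_of_hasCompactSupport hpdg_supp.mul_left
      have hf'g : Integrable (fun x : Fin d → ℝ =>
          fderiv ℝ (fun y => eval y p) x (Pi.single i 1) * g x) volume := by
        have : (fun x : Fin d → ℝ => fderiv ℝ (fun y => eval y p) x (Pi.single i 1) * g x)
            = fun x => eval x (pderiv i p) * g x := by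
          funext x
          rw [show fderiv ℝ (fun y => eval y p) x (Pi.single i 1) = pd i (fun y => eval y p) x
            from rfl, pd_eval]
        rw [this]
        exact (hqcont.mul hgcont).integrable_of_hasCompactSupport hgc.mul_left
      have hfg : Integrable (fun x : Fin d → ℝ => eval x p * g x) volume :=
        (hpcont.mul hgcont).integrable_of_hasCompactSupport hgc.mul_left
      have hibp := integral_mul_fderiv_eq_neg_fderiv_mul_of_integrable
        (μ := volume) (v := Pi.single i 1) hf'g hfg' hfg
        (fun x _ => (eval_differentiable p) x) (fun x _ => (hg.differentiable (by simp)) x)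
      have hstep : ∫ x : Fin d → ℝ, eval x p * pdMulti ι f x
          = - ∫ x : Fin d → ℝ, eval x (pderiv i p) * g x := by
        rw [show (fun x : Fin d → ℝ => eval x p * pdMulti ι f x)
            = fun x => eval x p * fderiv ℝ g x (Pi.single i 1) from rfl, hibp]
        congr 1
        congr 1
        funext x
        rw [show fderiv ℝ (fun y => eval y p) x (Pi.single i 1) = pd i (fun y => eval y p) x
          from rfl, pd_eval]
      rw [hstep, IH (ι ∘ Fin.succ) f hf hfc (pderiv i p) ?_, neg_zero]
      by_cases h0 : p.totalDegree = 0
      · exact Or.inr (pderiv_eq_zero_of_totalDegree_eq_zero i p h0)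
      · exact Or.inl (lt_of_lt_of_le (totalDegree_pderiv_lt i p (by omega)) (by omega))

theorem low_moments_vanish_for_k_derivative_gauss_law
    (d k l : ℕ) (hd : 1 ≤ d) (hk : 1 ≤ k) (hl : l ≤ k - 1)
    (E : (Fin k → Fin d) → (Fin d → ℝ) → ℝ)
    (hE : ∀ ι, ContDiff ℝ (⊤ : ℕ∞) (E ι)) (hEc : ∀ ι, HasCompactSupport (E ι))
    (ρ : (Fin d → ℝ) → ℝ)
    (hρ : ρ = fun x => ∑ ι : Fin k → Fin d, pdMulti ι (E ι) x)
    (js : Fin l → Fin d) :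
    ∫ x : Fin d → ℝ, (∏ a : Fin l, x (js a)) * ρ x = 0 := by
  subst hρ
  have hE' : ∀ ι : Fin k → Fin d, ContDiff ℝ ∞ (E ι) := fun ι => (hE ι).of_le (by simp)
  have hcont : ∀ ι : Fin k → Fin d, Continuous (pdMulti ι (E ι)) :=
    fun ι => (pdMulti_contDiff ι (hE' ι)).continuous
  have hP : Continuous (fun x : Fin d → ℝ => ∏ a : Fin l, x (js a)) :=
    continuous_finset_prod _ fun a _ => continuous_apply _
  have hsplit : ∫ x : Fin d → ℝ, (∏ a : Fin l, x (js a)) * ∑ ι : Fin k → Fin d,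
      pdMulti ι (E ι) x = ∑ ι : Fin k → Fin d,
      ∫ x : Fin d → ℝ, (∏ a : Fin l, x (js a)) * pdMulti ι (E ι) x := by
    simp_rw [Finset.mul_sum]
    exact integral_finset_sum _ fun ι _ =>
      (hP.mul (hcont ι)).integrable_of_hasCompactSupport
        (pdMulti_compactSupport ι (hEc ι)).mul_left
  rw [hsplit]
  refine Finset.sum_eq_zero fun ι _ => ?_
  set q : MvPolynomial (Fin d) ℝ := ∏ a : Fin l, X (js a) with hq_def
  have hq : ∀ x : Fin d → ℝ, (∏ a : Fin l, x (js a)) = eval x q := by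
    intro x
    simp [hq_def]
  simp_rw [hq]
  refine key_lemma k ι (E ι) (hE' ι) (hEc ι) q (Or.inl ?_)
  have hdeg : q.totalDegree ≤ l := by
    refine (totalDegree_finset_prod _ _).trans ?_
    simp [totalDegree_X]
  omega
end

section
/- Let E^{i_1…i_p} : ℝ^d → ℝ be smooth compactly supported and totally antisymmetric in its p indices (p ≥ 2), and define ρ^{i_1…i_{p-1}} = ∂_j E^{j i_1…i_{p-1}}. Then for every l ≥ 0, the totally symmetrized moment ∫_{ℝ^d} ρ^{(i_0} x^{i_1} ⋯ x^{i_l)} dx vanishes (symmetrization over all l+1 free indices). -/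
open MeasureTheory MvPolynomial

/- ### Auxiliary lemmas -/

lemma pd_cont {d : ℕ} (j : Fin d) (f : (Fin d → ℝ) → ℝ) (hf : ContDiff ℝ (⊤ : ℕ∞) f) :
    Continuous (pd j f) :=
  (hf.continuous_fderiv (by simp)).clm_apply continuous_const

lemma pd_supp {d : ℕ} (j : Fin d) (f : (Fin d → ℝ) → ℝ) (hc : HasCompactSupport f) :
    HasCompactSupport (pd j f) :=
  (hc.fderiv ℝ).comp_left (g := fun L : (Fin d → ℝ) →L[ℝ] ℝ => L (Pi.single j 1)) rfl

lemma intg {d : ℕ} (f g : (Fin d → ℝ) → ℝ) (hf : Continuous f) (hc : HasCompactSupport f)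
    (hg : Continuous g) : Integrable (fun x => f x * g x) volume :=
  (hf.mul hg).integrable_of_hasCompactSupport (hc.mul_right)

lemma aux_ibp {d : ℕ} (j : Fin d) (f g : (Fin d → ℝ) → ℝ) (hf : ContDiff ℝ (⊤ : ℕ∞) f)
    (hc : HasCompactSupport f) (hg : Differentiable ℝ g) (hgc : Continuous g)
    (hg' : Continuous (pd j g)) :
    ∫ x, pd j f x * g x = - ∫ x, f x * pd j g x := by
  have h := integral_mul_fderiv_eq_neg_fderiv_mul_of_integrable (μ := volume)
    (f := f) (g := g) (v := Pi.single j 1)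
    (intg _ _ (pd_cont j f hf) (pd_supp j f hc) hgc)
    (intg _ _ (hf.continuous) hc hg')
    (intg _ _ (hf.continuous) hc hgc)
    (fun x _ => (hf.differentiable (by simp)) x) (fun x _ => hg x)
  have h' : ∫ x, f x * pd j g x = - ∫ x, pd j f x * g x := h
  linarith

lemma pd_prod {d l : ℕ} (k : Fin l → Fin d) (j : Fin d) :
    pd j (fun x => ∏ a : Fin l, x (k a)) =
      fun x => ∑ a : Fin l,
        (∏ b ∈ Finset.univ.erase a, x (k b)) * ((Pi.single j (1:ℝ) : Fin d → ℝ) (k a)) := by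
  funext x
  have hdiff : ∀ a : Fin l, a ∈ Finset.univ →
      DifferentiableAt ℝ (fun x : Fin d → ℝ => x (k a)) x :=
    fun a _ => (ContinuousLinearMap.proj (R := ℝ) (φ := fun _ : Fin d => ℝ) (k a)).differentiableAt
  have h := fderiv_finset_prod (𝕜 := ℝ) (u := Finset.univ)
    (g := fun a (x : Fin d → ℝ) => x (k a)) hdiff
  show fderiv ℝ (fun x => ∏ a : Fin l, x (k a)) x (Pi.single j 1) = _
  rw [h, ContinuousLinearMap.sum_apply]
  refine Finset.sum_congr rfl fun a _ => ?_
  rw [ContinuousLinearMap.smul_apply]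
  have : fderiv ℝ (fun x : Fin d → ℝ => x (k a)) x =
      ContinuousLinearMap.proj (R := ℝ) (φ := fun _ : Fin d => ℝ) (k a) :=
    (ContinuousLinearMap.proj (R := ℝ) (φ := fun _ : Fin d => ℝ) (k a)).fderiv
  rw [this]
  simp [smul_eq_mul]

lemma prod_diff {d l : ℕ} (k : Fin l → Fin d) :
    Differentiable ℝ (fun x : Fin d → ℝ => ∏ a : Fin l, x (k a)) := by
  intro x
  exact (HasFDerivAt.finset_prod (u := Finset.univ)
    (g := fun a (x : Fin d → ℝ) => x (k a))
    (g' := fun a => ContinuousLinearMap.proj (R := ℝ) (φ := fun _ : Fin d => ℝ) (k a))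
    (fun a _ => (ContinuousLinearMap.proj (R := ℝ)
      (φ := fun _ : Fin d => ℝ) (k a)).hasFDerivAt)).differentiableAt

lemma prod_cont {d l : ℕ} (k : Fin l → Fin d) :
    Continuous (fun x : Fin d → ℝ => ∏ a : Fin l, x (k a)) :=
  continuous_finset_prod _ fun a _ => continuous_apply (k a)

lemma pd_prod_cont {d l : ℕ} (k : Fin l → Fin d) (j : Fin d) :
    Continuous (pd j (fun x => ∏ a : Fin l, x (k a))) := by
  rw [pd_prod]
  exact continuous_finset_sum _ fun a _ =>
    (continuous_finset_prod _ fun b _ => continuous_apply (k b)).mul continuous_const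

/-- Integration by parts for one divergence term against a monomial. -/
lemma step {d r l : ℕ} (E : (Fin (r+2) → Fin d) → (Fin d → ℝ) → ℝ)
    (hE : ∀ ι, ContDiff ℝ (⊤ : ℕ∞) (E ι)) (hEc : ∀ ι, HasCompactSupport (E ι))
    (κ : Fin (r+1) → Fin d) (k : Fin l → Fin d) :
    ∫ x : Fin d → ℝ, (∑ j : Fin d, pd j (E (Fin.cons j κ)) x) * ∏ a : Fin l, x (k a)
      = - ∑ a : Fin l, ∫ x : Fin d → ℝ,
          E (Fin.cons (k a) κ) x * ∏ b ∈ Finset.univ.erase a, x (k b) := by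
  have hP := prod_cont k
  calc ∫ x : Fin d → ℝ, (∑ j : Fin d, pd j (E (Fin.cons j κ)) x) * ∏ a : Fin l, x (k a)
      = ∫ x : Fin d → ℝ, ∑ j : Fin d,
          pd j (E (Fin.cons j κ)) x * ∏ a : Fin l, x (k a) := by
        congr 1; funext x; rw [Finset.sum_mul]
    _ = ∑ j : Fin d, ∫ x : Fin d → ℝ,
          pd j (E (Fin.cons j κ)) x * ∏ a : Fin l, x (k a) :=
        integral_finset_sum _ (fun j _ =>
          intg _ _ (pd_cont j _ (hE _)) (pd_supp j _ (hEc _)) hP)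
    _ = ∑ j : Fin d, -∫ x : Fin d → ℝ,
          E (Fin.cons j κ) x * pd j (fun x => ∏ a : Fin l, x (k a)) x :=
        Finset.sum_congr rfl fun j _ =>
          aux_ibp j _ _ (hE _) (hEc _) (prod_diff k) hP (pd_prod_cont k j)
    _ = ∑ j : Fin d, -∑ a : Fin l, ((Pi.single j (1:ℝ) : Fin d → ℝ) (k a)) *
          ∫ x : Fin d → ℝ, E (Fin.cons j κ) x * ∏ b ∈ Finset.univ.erase a, x (k b) := by
        refine Finset.sum_congr rfl fun j _ => ?_
        congr 1
        rw [pd_prod]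
        calc ∫ x : Fin d → ℝ, E (Fin.cons j κ) x * ∑ a : Fin l,
              (∏ b ∈ Finset.univ.erase a, x (k b)) * ((Pi.single j (1:ℝ) : Fin d → ℝ) (k a))
            = ∫ x : Fin d → ℝ, ∑ a : Fin l, ((Pi.single j (1:ℝ) : Fin d → ℝ) (k a)) *
                (E (Fin.cons j κ) x * ∏ b ∈ Finset.univ.erase a, x (k b)) := by
              congr 1; funext x; rw [Finset.mul_sum]
              exact Finset.sum_congr rfl fun a _ => by ring
          _ = ∑ a : Fin l, ∫ x : Fin d → ℝ, ((Pi.single j (1:ℝ) : Fin d → ℝ) (k a)) *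
                (E (Fin.cons j κ) x * ∏ b ∈ Finset.univ.erase a, x (k b)) := by
              refine integral_finset_sum _ (fun a _ => Integrable.const_mul ?_ _)
              exact intg _ _ (hE _).continuous (hEc _)
                (continuous_finset_prod _ fun b _ => continuous_apply (k b))
          _ = ∑ a : Fin l, ((Pi.single j (1:ℝ) : Fin d → ℝ) (k a)) *
                ∫ x : Fin d → ℝ, E (Fin.cons j κ) x * ∏ b ∈ Finset.univ.erase a, x (k b) := by
              exact Finset.sum_congr rfl fun a _ => integral_const_mul _ _
    _ = - ∑ a : Fin l, ∫ x : Fin d → ℝ,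
          E (Fin.cons (k a) κ) x * ∏ b ∈ Finset.univ.erase a, x (k b) := by
        have : (∑ j : Fin d, ∑ a : Fin l, ((Pi.single j (1:ℝ) : Fin d → ℝ) (k a)) *
            ∫ x : Fin d → ℝ, E (Fin.cons j κ) x * ∏ b ∈ Finset.univ.erase a, x (k b))
            = ∑ a : Fin l, ∫ x : Fin d → ℝ,
              E (Fin.cons (k a) κ) x * ∏ b ∈ Finset.univ.erase a, x (k b) := by
          rw [Finset.sum_comm]
          refine Finset.sum_congr rfl fun a _ => ?_
          simp [Pi.single_apply, ite_mul, Finset.sum_ite_eq]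
        rw [← this]; exact Finset.sum_neg_distrib _

lemma cons_comp_swap {d r : ℕ} (u v : Fin d) (rest : Fin r → Fin d) :
    (Fin.cons u (Fin.cons v rest) : Fin (r+2) → Fin d) ∘ (Equiv.swap 0 1)
      = Fin.cons v (Fin.cons u rest) := by
  funext m
  simp only [Function.comp_apply]
  refine Fin.cases ?_ (fun p => ?_) m
  · rw [Equiv.swap_apply_left, ← Fin.succ_zero_eq_one]
    simp
  · refine Fin.cases ?_ (fun q => ?_) p
    · rw [Fin.succ_zero_eq_one, Equiv.swap_apply_right, Fin.cons_zero,
        ← Fin.succ_zero_eq_one, Fin.cons_succ, Fin.cons_zero]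
    · have h1 : (q.succ.succ : Fin (r+2)) ≠ 0 := Fin.succ_ne_zero _
      have h2 : (q.succ.succ : Fin (r+2)) ≠ 1 := by
        rw [← Fin.succ_zero_eq_one]
        exact fun h => Fin.succ_ne_zero q (Fin.succ_injective _ h)
      rw [Equiv.swap_apply_of_ne_of_ne h1 h2]
      simp [Fin.cons_succ]

lemma E_antisym {d r : ℕ} (E : (Fin (r + 2) → Fin d) → (Fin d → ℝ) → ℝ)
    (hanti : ∀ (ι : Fin (r + 2) → Fin d) (σ : Equiv.Perm (Fin (r + 2))),
      E (ι ∘ σ) = fun x => ((Equiv.Perm.sign σ : ℤ) : ℝ) * E ι x)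
    (u v : Fin d) (rest : Fin r → Fin d) (x : Fin d → ℝ) :
    E (Fin.cons v (Fin.cons u rest)) x = - E (Fin.cons u (Fin.cons v rest)) x := by
  have h := hanti (Fin.cons u (Fin.cons v rest)) (Equiv.swap 0 1)
  rw [cons_comp_swap] at h
  rw [h]
  have h01 : (0 : Fin (r+2)) ≠ 1 := by
    rw [← Fin.succ_zero_eq_one]
    exact (Fin.succ_ne_zero 0).symm
  rw [Equiv.Perm.sign_swap h01]
  norm_num

/-- The basic moment integral appearing after integration by parts. -/
noncomputable def Tm {d r l : ℕ} (E : (Fin (r + 2) → Fin d) → (Fin d → ℝ) → ℝ)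
    (i : Fin (l + 1) → Fin d) (rest : Fin r → Fin d)
    (σ : Equiv.Perm (Fin (l + 1))) (a : Fin l) : ℝ :=
  ∫ x : Fin d → ℝ, E (Fin.cons (i (σ a.succ)) (Fin.cons (i (σ 0)) rest)) x *
    ∏ b ∈ Finset.univ.erase a, x (i (σ b.succ))

theorem p_form_electrodynamics_symmetrized_moments
    (d r : ℕ) (hd : r + 2 ≤ d)
    (E : (Fin (r + 2) → Fin d) → (Fin d → ℝ) → ℝ)
    (hE : ∀ ι, ContDiff ℝ (⊤ : ℕ∞) (E ι)) (hEc : ∀ ι, HasCompactSupport (E ι))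
    (hanti : ∀ (ι : Fin (r + 2) → Fin d) (σ : Equiv.Perm (Fin (r + 2))),
      E (ι ∘ σ) = fun x => ((Equiv.Perm.sign σ : ℤ) : ℝ) * E ι x)
    (ρ : (Fin (r + 1) → Fin d) → (Fin d → ℝ) → ℝ)
    (hρ : ∀ κ, ρ κ = fun x => ∑ j : Fin d, pd j (E (Fin.cons j κ)) x) :
    ∀ (l : ℕ) (i : Fin (l + 1) → Fin d) (rest : Fin r → Fin d),
      ((Nat.factorial (l + 1) : ℝ))⁻¹ *
        ∑ σ : Equiv.Perm (Fin (l + 1)),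
          ∫ x : Fin d → ℝ,
            ρ (Fin.cons (i (σ 0)) rest) x * ∏ a : Fin l, x (i (σ a.succ)) = 0 := by
  intro l i rest
  have hstep : ∀ σ : Equiv.Perm (Fin (l + 1)),
      (∫ x : Fin d → ℝ, ρ (Fin.cons (i (σ 0)) rest) x * ∏ a : Fin l, x (i (σ a.succ)))
        = - ∑ a : Fin l, Tm E i rest σ a := by
    intro σ
    rw [hρ]
    exact step E hE hEc (Fin.cons (i (σ 0)) rest) (fun a => i (σ a.succ))
  have hzero : ∀ a : Fin l, ∑ σ : Equiv.Perm (Fin (l + 1)), Tm E i rest σ a = 0 := by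
    intro a
    have key : ∀ σ : Equiv.Perm (Fin (l + 1)),
        Tm E i rest (σ * Equiv.swap 0 a.succ) a = - Tm E i rest σ a := by
      intro σ
      have h0 : (σ * Equiv.swap 0 a.succ) 0 = σ a.succ := by
        simp [Equiv.Perm.mul_apply, Equiv.swap_apply_left]
      have h1 : (σ * Equiv.swap 0 a.succ) a.succ = σ 0 := by
        simp [Equiv.Perm.mul_apply, Equiv.swap_apply_right]
      have hprod : ∀ x : Fin d → ℝ,
          (∏ b ∈ Finset.univ.erase a, x (i ((σ * Equiv.swap 0 a.succ) b.succ)))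
            = ∏ b ∈ Finset.univ.erase a, x (i (σ b.succ)) := by
        intro x
        refine Finset.prod_congr rfl fun b hb => ?_
        have hb' : b ≠ a := (Finset.mem_erase.mp hb).1
        rw [Equiv.Perm.mul_apply, Equiv.swap_apply_of_ne_of_ne (Fin.succ_ne_zero b)
          (fun h => hb' (Fin.succ_injective _ h))]
      calc Tm E i rest (σ * Equiv.swap 0 a.succ) a
          = ∫ x : Fin d → ℝ, -(E (Fin.cons (i (σ a.succ)) (Fin.cons (i (σ 0)) rest)) x *
              ∏ b ∈ Finset.univ.erase a, x (i (σ b.succ))) := by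
            unfold Tm
            congr 1; funext x
            rw [h0, h1, hprod x,
              E_antisym E hanti (i (σ a.succ)) (i (σ 0)) rest x, neg_mul]
        _ = - Tm E i rest σ a := integral_neg _
    have hre : ∑ σ : Equiv.Perm (Fin (l + 1)), Tm E i rest (σ * Equiv.swap 0 a.succ) a
        = ∑ σ : Equiv.Perm (Fin (l + 1)), Tm E i rest σ a :=
      Fintype.sum_equiv (Equiv.mulRight (Equiv.swap 0 a.succ))
        (fun σ => Tm E i rest (σ * Equiv.swap 0 a.succ) a) (fun σ => Tm E i rest σ a)
        (fun σ => rfl)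
    have hneg : ∑ σ : Equiv.Perm (Fin (l + 1)), Tm E i rest σ a
        = - ∑ σ : Equiv.Perm (Fin (l + 1)), Tm E i rest σ a := by
      calc ∑ σ : Equiv.Perm (Fin (l + 1)), Tm E i rest σ a
          = ∑ σ : Equiv.Perm (Fin (l + 1)), Tm E i rest (σ * Equiv.swap 0 a.succ) a := hre.symm
        _ = ∑ σ : Equiv.Perm (Fin (l + 1)), -Tm E i rest σ a :=
            Finset.sum_congr rfl fun σ _ => key σ
        _ = - ∑ σ : Equiv.Perm (Fin (l + 1)), Tm E i rest σ a := Finset.sum_neg_distrib _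
    linarith
  have hsum : ∑ σ : Equiv.Perm (Fin (l + 1)),
      ∫ x : Fin d → ℝ, ρ (Fin.cons (i (σ 0)) rest) x * ∏ a : Fin l, x (i (σ a.succ)) = 0 := by
    calc ∑ σ : Equiv.Perm (Fin (l + 1)),
        ∫ x : Fin d → ℝ, ρ (Fin.cons (i (σ 0)) rest) x * ∏ a : Fin l, x (i (σ a.succ))
        = ∑ σ : Equiv.Perm (Fin (l + 1)), -∑ a : Fin l, Tm E i rest σ a :=
          Finset.sum_congr rfl fun σ _ => hstep σ
      _ = - ∑ σ : Equiv.Perm (Fin (l + 1)), ∑ a : Fin l, Tm E i rest σ a :=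
          Finset.sum_neg_distrib _
      _ = - ∑ a : Fin l, ∑ σ : Equiv.Perm (Fin (l + 1)), Tm E i rest σ a := by
          rw [Finset.sum_comm]
      _ = 0 := by simp [hzero]
  rw [hsum, mul_zero]
end
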